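/- arXiv:1712.05883 — 2 statements merged into one kernel-verified Lean document; each statement's English description precedes it below -/
import Mathlib

section
/- Let n ≥ 3, let G_n be the straight linear 2-tree on n vertices, let m = n − 2, and fix an integer k with 1 ≤ k ≤ n − 1. Define g(j) = r_{G_n}(j, j+k) for 1 ≤ j ≤ n − k. Then g(j) = g(n − k − j + 1) for all 1 ≤ j ≤ n − k. Moreover: if m − k is odd, then g is strictly decreasing for 1 ≤ j ≤ (m−k+3)/2 and strictly increasing for (m−k+3)/2 ≤ j ≤ n − k, so g has a unique minimum at j = (m−k+3)/2; if m − k is even, then g is strictly decreasing for 1 ≤ j ≤ (m−k+2)/2, g((m−k+2)/2) = g((m−k+4)/2), and g is strictly increasing for (m−k+4)/2 ≤ j ≤ n − k. In either case g attains its maximum exactly at the endpoints j = 1 and j = n − k. -/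
/-- The straight linear 2-tree on `n` vertices: vertices `0, …, n-1` (representing
`1, …, n`), with distinct vertices adjacent iff they differ by at most 2. -/
def linear2Tree (n : ℕ) : SimpleGraph (Fin n) where
  Adj i j := i ≠ j ∧ i.val ≤ j.val + 2 ∧ j.val ≤ i.val + 2
  symm := by
    constructor
    intro i j h
    exact ⟨h.1.symm, h.2.2, h.2.1⟩
  loopless := by
    constructor
    intro i h
    exact h.1 rfl

open scoped Classical in
/-- The combinatorial Laplacian (degree matrix minus adjacency matrix) of a graph on `Fin n`. -/
noncomputable def lap {n : ℕ} (G : SimpleGraph (Fin n)) : Matrix (Fin n) (Fin n) ℝ :=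
  Matrix.of fun a b =>
    if a = b then ∑ c : Fin n, (if G.Adj a c then (1 : ℝ) else 0)
    else if G.Adj a b then -1 else 0

/-- The source vector `e_i - e_j`. -/
def esrc {n : ℕ} (i j : Fin n) : Fin n → ℝ :=
  fun t => (if t = i then 1 else 0) - (if t = j then 1 else 0)

/-- `IsResistance G i j r` says: a solution `v` of `L v = e_i - e_j` exists, and every such
solution satisfies `r = v i - v j`; i.e. the resistance distance between `i` and `j` is `r`. -/
def IsResistance {n : ℕ} (G : SimpleGraph (Fin n)) (i j : Fin n) (r : ℝ) : Prop :=
  (∃ v : Fin n → ℝ, (lap G).mulVec v = esrc i j) ∧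
  ∀ v : Fin n → ℝ, (lap G).mulVec v = esrc i j → r = v i - v j


namespace S15
noncomputable def X : ℝ := (-3 - Real.sqrt 5)/2
noncomputable def Y : ℝ := (-3 + Real.sqrt 5)/2
lemma s5sq : Real.sqrt 5 ^ 2 = 5 := Real.sq_sqrt (by norm_num)
lemma s5lb : 2 < Real.sqrt 5 := by nlinarith [s5sq, Real.sqrt_nonneg 5]
lemma s5ub : Real.sqrt 5 < 3 := by nlinarith [s5sq, Real.sqrt_nonneg 5]
lemma h1 : X * Y = 1 := by unfold X Y; nlinarith [s5sq]
lemma h2 : X + Y = -3 := by unfold X Y; ring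
lemma h3 : X^2 + 3*X + 1 = 0 := by linear_combination X * h2 - h1
lemma hXlt : X < -2 := by unfold X; nlinarith [s5lb]
lemma hYneg : Y < 0 := by unfold Y; nlinarith [s5ub]
lemma hYgt : -1 < Y := by unfold Y; nlinarith [s5lb]
lemma hX0 : X ≠ 0 := by nlinarith [hXlt]
lemma hY0 : Y ≠ 0 := ne_of_lt hYneg
lemma hEpos : (0:ℝ) < Y - X := by nlinarith [hXlt, hYgt]
lemma hprod (s : ℤ) : X ^ s * Y ^ s = 1 := by rw [← mul_zpow, h1, one_zpow]
lemma Yinv (s : ℤ) : Y ^ s = (X ^ s)⁻¹ :=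
  eq_inv_of_mul_eq_one_left (by rw [mul_comm]; exact hprod s)
lemma Xadd (s u : ℤ) : X ^ (s + u) = X ^ s * X ^ u := zpow_add₀ hX0 s u
lemma Yadd (s u : ℤ) : Y ^ (s + u) = Y ^ s * Y ^ u := zpow_add₀ hY0 s u
lemma Xsub (s u : ℤ) : X ^ (s - u) = X ^ s * Y ^ u := by
  rw [zpow_sub₀ hX0, Yinv, div_eq_mul_inv]
lemma Ysub (s u : ℤ) : Y ^ (s - u) = Y ^ s * X ^ u := by
  rw [zpow_sub₀ hY0,
    show X ^ u = (Y ^ u)⁻¹ from eq_inv_of_mul_eq_one_left (hprod u), div_eq_mul_inv]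
lemma Xneg (s : ℤ) : X ^ (-s) = Y ^ s := by have := Xsub 0 s; simpa using this
lemma Yneg (s : ℤ) : Y ^ (-s) = X ^ s := by have := Ysub 0 s; simpa using this

noncomputable def WL (n1 a b : ℤ) (p q : ℝ) : ℝ :=
  ((X^n1 * Y^a + Y^n1 * X^a) - (X^n1 * Y^b + Y^n1 * X^b)) * (p + q - (X^a + Y^a))

noncomputable def WM (n1 a b : ℤ) (p q τ : ℝ) : ℝ :=
  ((a:ℝ) - τ) * (Y - X) * (X^n1 - Y^n1)
    - (X^n1 * Y^b + Y^n1 * X^b) * (p + q - (X^a + Y^a))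
    + (X^a + Y^a) * (X^n1 * q + Y^n1 * p - (X^n1 * Y^a + Y^n1 * X^a))

noncomputable def WR (n1 a b : ℤ) (p q : ℝ) : ℝ :=
  WM n1 a b (X^b) (Y^b) ((b:ℝ))
    - ((X^b + Y^b) - (X^a + Y^a)) * (X^n1 * q + Y^n1 * p - (X^n1 * Y^b + Y^n1 * X^b))

lemma Xsq : X^(2:ℤ) = X*X := by rw [show (2:ℤ) = 1+1 by norm_num, Xadd, zpow_one]
lemma Ysq : Y^(2:ℤ) = Y*Y := by rw [show (2:ℤ) = 1+1 by norm_num, Yadd, zpow_one]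

lemma CL (n1 a b : ℤ) :
    WL n1 a b (X^a*Y) (Y^a*X) = WM n1 a b (X^a*Y) (Y^a*X) ((a:ℝ)-1) := by
  have hA := hprod a
  simp only [WL, WM, WR, Xadd, Yadd, Xsub, Ysub, zpow_one]
  push_cast
  linear_combination (norm := ring1) ((-1:ℝ)*Y*Y^n1 + (1:ℝ)*Y*X^n1 + (1:ℝ)*X*Y^n1 + (-1:ℝ)*X*X^n1)*hA

lemma CL2 (n1 a b : ℤ) :
    WL n1 a b (X^a*X) (Y^a*Y) = WM n1 a b (X^a*X) (Y^a*Y) ((a:ℝ)+1) := by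
  have hA := hprod a
  simp only [WL, WM, WR, Xadd, Yadd, Xsub, Ysub, zpow_one]
  push_cast
  linear_combination (norm := ring1) ((1:ℝ)*Y*Y^n1 + (-1:ℝ)*Y*X^n1 + (-1:ℝ)*X*Y^n1 + (1:ℝ)*X*X^n1)*hA

lemma CR (n1 a b : ℤ) :
    WR n1 a b (X^b*X) (Y^b*Y) = WM n1 a b (X^b*X) (Y^b*Y) ((b:ℝ)+1) := by
  have hB := hprod b
  simp only [WL, WM, WR, Xadd, Yadd, Xsub, Ysub, zpow_one]
  push_cast
  linear_combination (norm := ring1) ((1:ℝ)*Y*Y^n1 + (-1:ℝ)*Y*X^n1 + (-1:ℝ)*X*Y^n1 + (1:ℝ)*X*X^n1)*hB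

lemma CR2 (n1 a b : ℤ) :
    WR n1 a b (X^b*Y) (Y^b*X) = WM n1 a b (X^b*Y) (Y^b*X) ((b:ℝ)-1) := by
  have hB := hprod b
  simp only [WL, WM, WR, Xadd, Yadd, Xsub, Ysub, zpow_one]
  push_cast
  linear_combination (norm := ring1) ((-1:ℝ)*Y*Y^n1 + (1:ℝ)*Y*X^n1 + (1:ℝ)*X*Y^n1 + (-1:ℝ)*X*X^n1)*hB

lemma HL (n1 a b t : ℤ) :
    4*WL n1 a b (X^t) (Y^t) - WL n1 a b (X^t*(Y*Y)) (Y^t*(X*X)) - WL n1 a b (X^t*Y) (Y^t*X) - WL n1 a b (X^t*X) (Y^t*Y) - WL n1 a b (X^t*(X*X)) (Y^t*(Y*Y)) = 0 := by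
  simp only [WL, WM, WR, Xadd, Yadd, Xsub, Ysub, zpow_one]
  push_cast
  linear_combination (norm := ring1) ((-1:ℝ)*Y^t*Y^b*X^n1 + (-1:ℝ)*Y^t*X^b*Y^n1 + (1:ℝ)*Y^t*Y^a*X^n1 + (1:ℝ)*Y^t*X^a*Y^n1 + (-1:ℝ)*X^t*Y^b*X^n1 + (-1:ℝ)*X^t*X^b*Y^n1 + (1:ℝ)*X^t*Y^a*X^n1 + (1:ℝ)*X^t*X^a*Y^n1)*h1 + ((-2:ℝ)*Y^t*Y^b*X^n1 + (-2:ℝ)*Y^t*X^b*Y^n1 + (2:ℝ)*Y^t*Y^a*X^n1 + (2:ℝ)*Y^t*X^a*Y^n1 + (-2:ℝ)*X^t*Y^b*X^n1 + (-2:ℝ)*X^t*X^b*Y^n1 + (2:ℝ)*X^t*Y^a*X^n1 + (2:ℝ)*X^t*X^a*Y^n1 + (1:ℝ)*Y*Y^t*Y^b*X^n1 + (1:ℝ)*Y*Y^t*X^b*Y^n1 + (-1:ℝ)*Y*Y^t*Y^a*X^n1 + (-1:ℝ)*Y*Y^t*X^a*Y^n1 + (1:ℝ)*Y*X^t*Y^b*X^n1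 + (1:ℝ)*Y*X^t*X^b*Y^n1 + (-1:ℝ)*Y*X^t*Y^a*X^n1 + (-1:ℝ)*Y*X^t*X^a*Y^n1)*h2 + ((1:ℝ)*Y^t*Y^b*X^n1 + (1:ℝ)*Y^t*X^b*Y^n1 + (-1:ℝ)*Y^t*Y^a*X^n1 + (-1:ℝ)*Y^t*X^a*Y^n1 + (1:ℝ)*X^t*Y^b*X^n1 + (1:ℝ)*X^t*X^b*Y^n1 + (-1:ℝ)*X^t*Y^a*X^n1 + (-1:ℝ)*X^t*X^a*Y^n1)*h3

lemma HM (n1 a b t : ℤ) :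
    4*WM n1 a b (X^t) (Y^t) ((t:ℝ)) - WM n1 a b (X^t*(Y*Y)) (Y^t*(X*X)) ((t:ℝ)-2) - WM n1 a b (X^t*Y) (Y^t*X) ((t:ℝ)-1) - WM n1 a b (X^t*X) (Y^t*Y) ((t:ℝ)+1) - WM n1 a b (X^t*(X*X)) (Y^t*(Y*Y)) ((t:ℝ)+2) = 0 := by
  simp only [WL, WM, WR, Xadd, Yadd, Xsub, Ysub, zpow_one]
  push_cast
  linear_combination (norm := ring1) ((-1:ℝ)*Y^t*Y^b*X^n1 + (-1:ℝ)*Y^t*X^b*Y^n1 + (1:ℝ)*Y^t*Y^a*X^n1 + (1:ℝ)*Y^t*X^a*X^n1 + (-1:ℝ)*X^t*Y^b*X^n1 + (-1:ℝ)*X^t*X^b*Y^n1 + (1:ℝ)*X^t*Y^a*Y^n1 + (1:ℝ)*X^t*X^a*Y^n1)*h1 + ((-2:ℝ)*Y^t*Y^b*X^n1 + (-2:ℝ)*Y^t*X^b*Y^n1 + (2:ℝ)*Y^t*Y^a*X^n1 + (2:ℝ)*Y^t*X^a*X^n1 + (-2:ℝ)*X^t*Y^b*X^n1 + (-2:ℝ)*X^t*X^b*Y^n1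 + (2:ℝ)*X^t*Y^a*Y^n1 + (2:ℝ)*X^t*X^a*Y^n1 + (1:ℝ)*Y*Y^t*Y^b*X^n1 + (1:ℝ)*Y*Y^t*X^b*Y^n1 + (-1:ℝ)*Y*Y^t*Y^a*X^n1 + (-1:ℝ)*Y*Y^t*X^a*X^n1 + (1:ℝ)*Y*X^t*Y^b*X^n1 + (1:ℝ)*Y*X^t*X^b*Y^n1 + (-1:ℝ)*Y*X^t*Y^a*Y^n1 + (-1:ℝ)*Y*X^t*X^a*Y^n1)*h2 + ((1:ℝ)*Y^t*Y^b*X^n1 + (1:ℝ)*Y^t*X^b*Y^n1 + (-1:ℝ)*Y^t*Y^a*X^n1 + (-1:ℝ)*Y^t*X^a*X^n1 + (1:ℝ)*X^t*Y^b*X^n1 + (1:ℝ)*X^t*X^b*Y^n1 + (-1:ℝ)*X^t*Y^a*Y^n1 + (-1:ℝ)*X^t*X^a*Y^n1)*h3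

lemma HR (n1 a b t : ℤ) :
    4*WR n1 a b (X^t) (Y^t) - WR n1 a b (X^t*(Y*Y)) (Y^t*(X*X)) - WR n1 a b (X^t*Y) (Y^t*X) - WR n1 a b (X^t*X) (Y^t*Y) - WR n1 a b (X^t*(X*X)) (Y^t*(Y*Y)) = 0 := by
  simp only [WL, WM, WR, Xadd, Yadd, Xsub, Ysub, zpow_one]
  push_cast
  linear_combination (norm := ring1) ((-1:ℝ)*Y^t*Y^b*X^n1 + (-1:ℝ)*Y^t*X^b*X^n1 + (1:ℝ)*Y^t*Y^a*X^n1 + (1:ℝ)*Y^t*X^a*X^n1 + (-1:ℝ)*X^t*Y^b*Y^n1 + (-1:ℝ)*X^t*X^b*Y^n1 + (1:ℝ)*X^t*Y^a*Y^n1 + (1:ℝ)*X^t*X^a*Y^n1)*h1 + ((-2:ℝ)*Y^t*Y^b*X^n1 + (-2:ℝ)*Y^t*X^b*X^n1 + (2:ℝ)*Y^t*Y^a*X^n1 + (2:ℝ)*Y^t*X^a*X^n1 + (-2:ℝ)*X^t*Y^b*Y^n1 + (-2:ℝ)*X^t*X^b*Y^n1 + (2:ℝ)*X^t*Y^a*Y^n1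 + (2:ℝ)*X^t*X^a*Y^n1 + (1:ℝ)*Y*Y^t*Y^b*X^n1 + (1:ℝ)*Y*Y^t*X^b*X^n1 + (-1:ℝ)*Y*Y^t*Y^a*X^n1 + (-1:ℝ)*Y*Y^t*X^a*X^n1 + (1:ℝ)*Y*X^t*Y^b*Y^n1 + (1:ℝ)*Y*X^t*X^b*Y^n1 + (-1:ℝ)*Y*X^t*Y^a*Y^n1 + (-1:ℝ)*Y*X^t*X^a*Y^n1)*h2 + ((1:ℝ)*Y^t*Y^b*X^n1 + (1:ℝ)*Y^t*X^b*X^n1 + (-1:ℝ)*Y^t*Y^a*X^n1 + (-1:ℝ)*Y^t*X^a*X^n1 + (1:ℝ)*X^t*Y^b*Y^n1 + (1:ℝ)*X^t*X^b*Y^n1 + (-1:ℝ)*X^t*Y^a*Y^n1 + (-1:ℝ)*X^t*X^a*Y^n1)*h3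

lemma MIXA (n1 a b : ℤ) :
    4*WL n1 a b (X^a) (Y^a) - WL n1 a b (X^a*(Y*Y)) (Y^a*(X*X)) - WL n1 a b (X^a*Y) (Y^a*X) - WM n1 a b (X^a*X) (Y^a*Y) ((a:ℝ)+1) - WM n1 a b (X^a*(X*X)) (Y^a*(Y*Y)) ((a:ℝ)+2) = 5*(Y-X)*(X^n1-Y^n1) := by
  have hA := hprod a
  simp only [WL, WM, WR, Xadd, Yadd, Xsub, Ysub, zpow_one]
  push_cast
  linear_combination (norm := ring1) ((2:ℝ)*X^n1 + (-1:ℝ)*Y^a*Y^b*X^n1 + (-1:ℝ)*Y^a*X^b*Y^n1 + (1:ℝ)*(Y^a)^2*X^n1 + (-1:ℝ)*X^a*Y^b*X^n1 + (-1:ℝ)*X^a*X^b*Y^n1 + (1:ℝ)*(X^a)^2*Y^n1)*h1 + ((4:ℝ)*Y^n1 + (4:ℝ)*X^n1 + (-2:ℝ)*Y*X^n1 + (-2:ℝ)*Y^2*X^n1 + (-2:ℝ)*X*Y^n1 + (-2:ℝ)*X^2*Y^n1)*hA + ((2:ℝ)*Y^n1 + (2:ℝ)*X^n1 + (-2:ℝ)*Y^a*Y^b*X^n1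 + (-2:ℝ)*Y^a*X^b*Y^n1 + (2:ℝ)*(Y^a)^2*X^n1 + (-2:ℝ)*X^a*Y^b*X^n1 + (-2:ℝ)*X^a*X^b*Y^n1 + (2:ℝ)*(X^a)^2*Y^n1 + (-2:ℝ)*Y*X^n1 + (1:ℝ)*Y*Y^a*Y^b*X^n1 + (1:ℝ)*Y*Y^a*X^b*Y^n1 + (-1:ℝ)*Y*(Y^a)^2*X^n1 + (1:ℝ)*Y*X^a*Y^b*X^n1 + (1:ℝ)*Y*X^a*X^b*Y^n1 + (-1:ℝ)*Y*(X^a)^2*Y^n1)*h2 + ((-2:ℝ)*Y^n1 + (1:ℝ)*Y^a*Y^b*X^n1 + (1:ℝ)*Y^a*X^b*Y^n1 + (-1:ℝ)*(Y^a)^2*X^n1 + (1:ℝ)*X^a*Y^b*X^n1 + (1:ℝ)*X^a*X^b*Y^n1 + (-1:ℝ)*(X^a)^2*Y^n1)*h3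

lemma MIXB (n1 a b : ℤ) :
    4*WM n1 a b (X^b) (Y^b) ((b:ℝ)) - WM n1 a b (X^b*(Y*Y)) (Y^b*(X*X)) ((b:ℝ)-2) - WM n1 a b (X^b*Y) (Y^b*X) ((b:ℝ)-1) - WR n1 a b (X^b*X) (Y^b*Y) - WR n1 a b (X^b*(X*X)) (Y^b*(Y*Y)) = -(5*(Y-X)*(X^n1-Y^n1)) := by
  have hB := hprod b
  simp only [WL, WM, WR, Xadd, Yadd, Xsub, Ysub, zpow_one]
  push_cast
  linear_combination (norm := ring1) ((-2:ℝ)*X^n1 + (-1:ℝ)*(Y^b)^2*X^n1 + (-1:ℝ)*(X^b)^2*Y^n1 + (1:ℝ)*Y^a*Y^b*X^n1 + (1:ℝ)*Y^a*X^b*Y^n1 + (1:ℝ)*X^a*Y^b*X^n1 + (1:ℝ)*X^a*X^b*Y^n1)*h1 + ((-4:ℝ)*Y^n1 + (-4:ℝ)*X^n1 + (2:ℝ)*Y*X^n1 + (2:ℝ)*Y^2*X^n1 + (2:ℝ)*X*Y^n1 + (2:ℝ)*X^2*Y^n1)*hB + ((-2:ℝ)*Y^n1 + (-2:ℝ)*X^n1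 + (-2:ℝ)*(Y^b)^2*X^n1 + (-2:ℝ)*(X^b)^2*Y^n1 + (2:ℝ)*Y^a*Y^b*X^n1 + (2:ℝ)*Y^a*X^b*Y^n1 + (2:ℝ)*X^a*Y^b*X^n1 + (2:ℝ)*X^a*X^b*Y^n1 + (2:ℝ)*Y*X^n1 + (1:ℝ)*Y*(Y^b)^2*X^n1 + (1:ℝ)*Y*(X^b)^2*Y^n1 + (-1:ℝ)*Y*Y^a*Y^b*X^n1 + (-1:ℝ)*Y*Y^a*X^b*Y^n1 + (-1:ℝ)*Y*X^a*Y^b*X^n1 + (-1:ℝ)*Y*X^a*X^b*Y^n1)*h2 + ((2:ℝ)*Y^n1 + (1:ℝ)*(Y^b)^2*X^n1 + (1:ℝ)*(X^b)^2*Y^n1 + (-1:ℝ)*Y^a*Y^b*X^n1 + (-1:ℝ)*Y^a*X^b*Y^n1 + (-1:ℝ)*X^a*Y^b*X^n1 + (-1:ℝ)*X^a*X^b*Y^n1)*h3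

lemma REFL1 (n1 a b : ℤ) :
    WL n1 a b Y X = WL n1 a b X Y := by
  simp only [WL, WM, WR, Xadd, Yadd, Xsub, Ysub, zpow_one]
  push_cast
  ring

lemma REFL2 (n1 a b : ℤ) :
    WL n1 a b (Y*Y) (X*X) = 2*WL n1 a b 1 1 - WL n1 a b X Y := by
  simp only [WL, WM, WR, Xadd, Yadd, Xsub, Ysub, zpow_one]
  push_cast
  linear_combination (norm := ring1) ((1:ℝ)*Y^b*X^n1 + (1:ℝ)*X^b*Y^n1 + (-1:ℝ)*Y^a*X^n1 + (-1:ℝ)*X^a*Y^n1)*h1 + ((2:ℝ)*Y^b*X^n1 + (2:ℝ)*X^b*Y^n1 + (-2:ℝ)*Y^a*X^n1 + (-2:ℝ)*X^a*Y^n1 + (-1:ℝ)*Y*Y^b*X^n1 + (-1:ℝ)*Y*X^b*Y^n1 + (1:ℝ)*Y*Y^a*X^n1 + (1:ℝ)*Y*X^a*Y^n1)*h2 + ((-1:ℝ)*Y^b*X^n1 + (-1:ℝ)*X^b*Y^n1 + (1:ℝ)*Y^a*X^n1 + (1:ℝ)*X^a*Y^n1)*h3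

lemma REFR1 (n1 a b : ℤ) :
    WR n1 a b (X^n1*X) (Y^n1*Y) = WR n1 a b (X^n1*Y) (Y^n1*X) := by
  simp only [WL, WM, WR, Xadd, Yadd, Xsub, Ysub, zpow_one]
  push_cast
  ring

lemma REFR2 (n1 a b : ℤ) :
    WR n1 a b (X^n1*(X*X)) (Y^n1*(Y*Y)) = 2*WR n1 a b (X^n1) (Y^n1) - WR n1 a b (X^n1*Y) (Y^n1*X) := by
  have hN := hprod n1
  simp only [WL, WM, WR, Xadd, Yadd, Xsub, Ysub, zpow_one]
  push_cast
  linear_combination (norm := ring1) ((1:ℝ)*Y^b + (1:ℝ)*X^b + (-1:ℝ)*Y^a + (-1:ℝ)*X^a)*h1 + ((4:ℝ)*Y^b + (4:ℝ)*X^b + (-4:ℝ)*Y^a + (-4:ℝ)*X^a + (-1:ℝ)*Y*Y^b + (-1:ℝ)*Y*X^b + (1:ℝ)*Y*Y^a + (1:ℝ)*Y*X^a + (-1:ℝ)*Y^2*Y^b + (-1:ℝ)*Y^2*X^b + (1:ℝ)*Y^2*Y^a + (1:ℝ)*Y^2*X^a + (-1:ℝ)*X*Y^b + (-1:ℝ)*X*X^b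 + (1:ℝ)*X*Y^a + (1:ℝ)*X*X^a + (-1:ℝ)*X^2*Y^b + (-1:ℝ)*X^2*X^b + (1:ℝ)*X^2*Y^a + (1:ℝ)*X^2*X^a)*hN + ((2:ℝ)*Y^b + (2:ℝ)*X^b + (-2:ℝ)*Y^a + (-2:ℝ)*X^a + (-1:ℝ)*Y*Y^b + (-1:ℝ)*Y*X^b + (1:ℝ)*Y*Y^a + (1:ℝ)*Y*X^a)*h2 + ((-1:ℝ)*Y^b + (-1:ℝ)*X^b + (1:ℝ)*Y^a + (1:ℝ)*X^a)*h3

lemma W0M (n1 a b : ℤ) :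
    WM n1 a b (X^a) (Y^a) ((a:ℝ)) = 0 := by
  simp only [WL, WM, WR, Xadd, Yadd, Xsub, Ysub, zpow_one]
  push_cast
  ring

lemma W0L (n1 a b : ℤ) :
    WL n1 a b (X^a) (Y^a) = 0 := by
  simp only [WL, WM, WR, Xadd, Yadd, Xsub, Ysub, zpow_one]
  push_cast
  ring

lemma WBB (n1 a b : ℤ) :
    WR n1 a b (X^b) (Y^b) = WM n1 a b (X^b) (Y^b) ((b:ℝ)) := by
  simp only [WL, WM, WR, Xadd, Yadd, Xsub, Ysub, zpow_one]
  push_cast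
  ring

lemma SYM (n1 a b : ℤ) :
    WM n1 (n1-b) (n1-a) (X^n1*Y^a) (Y^n1*X^a) ((n1:ℝ)-(a:ℝ)) = WM n1 a b (X^b) (Y^b) ((b:ℝ)) := by
  have hA := hprod a
  have hB := hprod b
  have hN := hprod n1
  simp only [WL, WM, WR, Xadd, Yadd, Xsub, Ysub, zpow_one]
  push_cast
  linear_combination (norm := ring1) ((1:ℝ)*Y^n1 + (1:ℝ)*X^n1 + (-1:ℝ)*X^n1*(Y^n1)^2 + (-1:ℝ)*(X^n1)^2*Y^n1)*hA + ((1:ℝ)*Y^n1 + (1:ℝ)*X^n1 + (-1:ℝ)*X^n1*(Y^n1)^2 + (-1:ℝ)*(X^n1)^2*Y^n1)*hB + ((-2:ℝ)*Y^n1 + (-2:ℝ)*X^n1 + (-1:ℝ)*(Y^b)^2*X^n1 + (-1:ℝ)*(X^b)^2*Y^n1 + (2:ℝ)*Y^a*Y^b*X^n1 + (2:ℝ)*Y^a*X^b*Y^n1 + (-1:ℝ)*(Y^a)^2*X^n1 + (2:ℝ)*X^a*Y^b*X^n1 + (2:ℝ)*X^a*X^b*Y^n1 + (-1:ℝ)*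(X^a)^2*Y^n1)*hN

lemma I2 (n1 a b : ℤ) :
    -(WM n1 (a+1) (b+1) (X^b*X) (Y^b*Y) ((b:ℝ)+1)) + WM n1 a b (X^b) (Y^b) ((b:ℝ)) = (X^b*Y^a + X^a*Y^b - 2) * ((X^n1*Y^a*Y^b*Y) - (Y^n1*X^a*X^b*X)) * (Y-X) := by
  have hA := hprod a
  have hB := hprod b
  simp only [WL, WM, WR, Xadd, Yadd, Xsub, Ysub, zpow_one]
  push_cast
  linear_combination (norm := ring1) ((1:ℝ)*X^b*Y^b*Y^n1 + (1:ℝ)*X^b*Y^b*X^n1 + (-2:ℝ)*Y^a*Y^b*X^n1 + (-2:ℝ)*Y^a*X^b*Y^n1 + (1:ℝ)*(Y^a)^2*X^b*Y^b*X^n1 + (-2:ℝ)*X^a*Y^b*X^n1 + (-2:ℝ)*X^a*X^b*Y^n1 + (1:ℝ)*X^a*Y^a*Y^n1 + (1:ℝ)*X^a*Y^a*X^n1 + (1:ℝ)*X^a*Y^a*(Y^b)^2*X^n1 + (1:ℝ)*X^a*Y^a*(X^b)^2*Y^n1 + (1:ℝ)*(X^a)^2*X^b*Y^b*Y^n1)*h1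 + ((1:ℝ)*(Y^b)^2*X^n1 + (1:ℝ)*(X^b)^2*Y^n1 + (-1:ℝ)*Y^2*(Y^b)^2*X^n1 + (-1:ℝ)*X^2*(X^b)^2*Y^n1)*hA + ((1:ℝ)*(Y^a)^2*X^n1 + (1:ℝ)*(X^a)^2*Y^n1 + (-1:ℝ)*Y^2*(Y^a)^2*X^n1 + (-1:ℝ)*X^2*(X^a)^2*Y^n1)*hB

/-- The (cleared) potential function. -/
noncomputable def U (n1 a b t : ℤ) : ℝ :=
  if t ≤ a then WL n1 a b (X^t) (Y^t)
  else if t ≤ b then WM n1 a b (X^t) (Y^t) ((t:ℝ))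
  else WR n1 a b (X^t) (Y^t)

noncomputable def CC (n1 : ℤ) : ℝ := 5 * (Y - X) * (X^n1 - Y^n1)

noncomputable def V (n1 a b t : ℤ) : ℝ := U n1 a b t / CC n1

lemma UL (n1 a b : ℤ) (hab : a < b) :
    ∀ s, s ≤ a + 1 → U n1 a b s = WL n1 a b (X^s) (Y^s) := by
  intro s hs
  by_cases h : s ≤ a
  · rw [U, if_pos h]
  · have hsa : s = a + 1 := by omega
    subst hsa
    rw [U, if_neg h, if_pos (by omega)]
    simp only [Xadd, Yadd, zpow_one]
    push_cast
    linear_combination -(CL2 n1 a b)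

lemma UM (n1 a b : ℤ) (hab : a < b) :
    ∀ s, a - 1 ≤ s → s ≤ b + 1 → U n1 a b s = WM n1 a b (X^s) (Y^s) ((s:ℝ)) := by
  intro s hs1 hs2
  rcases lt_trichotomy s a with h | h | h
  · have hsa : s = a - 1 := by omega
    subst hsa
    rw [U, if_pos (by omega)]
    simp only [Xsub, Ysub, zpow_one]
    push_cast
    linear_combination CL n1 a b
  · subst h
    rw [U, if_pos le_rfl, W0L, W0M]
  · by_cases h2 : s ≤ b
    · rw [U, if_neg (by omega), if_pos h2]
    · have hsb : s = b + 1 := by omega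
      subst hsb
      rw [U, if_neg (by omega), if_neg (by omega)]
      simp only [Xadd, Yadd, zpow_one]
      push_cast
      linear_combination CR n1 a b

lemma UR (n1 a b : ℤ) (hab : a < b) :
    ∀ s, b - 1 ≤ s → U n1 a b s = WR n1 a b (X^s) (Y^s) := by
  intro s hs
  rcases lt_trichotomy s b with h | h | h
  · have hsb : s = b - 1 := by omega
    subst hsb
    rw [UM n1 a b hab (b-1) (by omega) (by omega)]
    simp only [Xsub, Ysub, zpow_one]
    push_cast
    linear_combination -(CR2 n1 a b)
  · subst h
    rw [U, if_neg (by omega), if_pos le_rfl, ← WBB]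
  · rw [U, if_neg (by omega), if_neg (by omega)]

/-- The rows of the recurrence, over all of ℤ. -/
lemma R1U (n1 a b t : ℤ) (hab : a < b) :
    4 * U n1 a b t - U n1 a b (t-2) - U n1 a b (t-1) - U n1 a b (t+1) - U n1 a b (t+2)
      = ((if t = a then 1 else 0) - (if t = b then 1 else 0)) * (5*(Y-X)*(X^n1-Y^n1)) := by
  rcases lt_trichotomy t a with h | h | h
  · -- all-left zone
    rw [if_neg (by omega), if_neg (by omega)]
    rw [UL n1 a b hab t (by omega), UL n1 a b hab (t-2) (by omega),
      UL n1 a b hab (t-1) (by omega), UL n1 a b hab (t+1) (by omega),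
      UL n1 a b hab (t+2) (by omega)]
    simp only [Xadd, Yadd, Xsub, Ysub, zpow_one, Xsq, Ysq]
    linear_combination HL n1 a b t
  · -- t = a
    rw [h]
    rw [if_pos rfl, if_neg (by omega)]
    rw [UL n1 a b hab a (by omega), UL n1 a b hab (a-2) (by omega),
      UL n1 a b hab (a-1) (by omega), UM n1 a b hab (a+1) (by omega) (by omega),
      UM n1 a b hab (a+2) (by omega) (by omega)]
    simp only [Xadd, Yadd, Xsub, Ysub, zpow_one, Xsq, Ysq]
    push_cast
    linear_combination MIXA n1 a b
  · rcases lt_trichotomy t b with h' | h' | h'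
    · -- middle zone
      rw [if_neg (by omega), if_neg (by omega)]
      rw [UM n1 a b hab t (by omega) (by omega), UM n1 a b hab (t-2) (by omega) (by omega),
        UM n1 a b hab (t-1) (by omega) (by omega), UM n1 a b hab (t+1) (by omega) (by omega),
        UM n1 a b hab (t+2) (by omega) (by omega)]
      simp only [Xadd, Yadd, Xsub, Ysub, zpow_one, Xsq, Ysq]
      push_cast
      linear_combination HM n1 a b t
    · -- t = b
      rw [h']
      rw [if_neg (by omega), if_pos rfl]
      rw [UM n1 a b hab b (by omega) (by omega), UM n1 a b hab (b-2) (by omega) (by omega),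
        UM n1 a b hab (b-1) (by omega) (by omega), UR n1 a b hab (b+1) (by omega),
        UR n1 a b hab (b+2) (by omega)]
      simp only [Xadd, Yadd, Xsub, Ysub, zpow_one, Xsq, Ysq]
      push_cast
      linear_combination MIXB n1 a b
    · -- all-right zone
      rw [if_neg (by omega), if_neg (by omega)]
      rw [UR n1 a b hab t (by omega), UR n1 a b hab (t-2) (by omega),
        UR n1 a b hab (t-1) (by omega), UR n1 a b hab (t+1) (by omega),
        UR n1 a b hab (t+2) (by omega)]
      simp only [Xadd, Yadd, Xsub, Ysub, zpow_one, Xsq, Ysq]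
      linear_combination HR n1 a b t
lemma hXX4 : (4:ℝ) < X*X := by nlinarith [hXlt]
lemma hYY0 : (0:ℝ) < Y*Y := mul_pos_of_neg_of_neg hYneg hYneg
lemma hYY1 : Y*Y < 1 := by nlinarith [hYgt, hYneg]
lemma hXneg : X < 0 := by nlinarith [hXlt]

lemma pow_facts (m : ℕ) : 1 ≤ (X*X)^m ∧ 0 < (Y*Y)^m ∧ (Y*Y)^m ≤ 1 := by
  refine ⟨one_le_pow₀ (by nlinarith [hXX4]), pow_pos hYY0 m, pow_le_one₀ (le_of_lt hYY0) (le_of_lt hYY1)⟩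

lemma even_decomp (m : ℕ) :
    (-1:ℝ)^(2*(m:ℤ)) = 1 ∧ X^(2*(m:ℤ)) = (X*X)^m ∧ Y^(2*(m:ℤ)) = (Y*Y)^m := by
  refine ⟨?_, ?_, ?_⟩
  · rw [zpow_mul]; norm_num
  · rw [zpow_mul, Xsq, zpow_natCast]
  · rw [zpow_mul, Ysq, zpow_natCast]

lemma odd_decomp (m : ℕ) :
    (-1:ℝ)^(2*(m:ℤ)+1) = -1 ∧ X^(2*(m:ℤ)+1) = (X*X)^m * X ∧ Y^(2*(m:ℤ)+1) = (Y*Y)^m * Y := by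
  obtain ⟨e1, e2, e3⟩ := even_decomp m
  refine ⟨?_, ?_, ?_⟩
  · rw [zpow_add₀ (by norm_num : (-1:ℝ) ≠ 0), e1, zpow_one]; ring
  · rw [zpow_add₀ hX0, e2, zpow_one]
  · rw [zpow_add₀ hY0, e3, zpow_one]

lemma nu_pos (s : ℤ) (hs : 1 ≤ s) : 0 < (-1:ℝ)^s * (X^s - Y^s) := by
  rcases Int.even_or_odd' s with ⟨m, rfl | rfl⟩
  · have hm0 : 0 ≤ m := by omega
    lift m to ℕ using hm0
    obtain ⟨e1, e2, e3⟩ := even_decomp m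
    obtain ⟨p1, p2, p3⟩ := pow_facts m
    have hmne : m ≠ 0 := by omega
    have h1x : 1 < (X*X)^m := one_lt_pow₀ (by nlinarith [hXX4]) hmne
    rw [e1, e2, e3]; nlinarith
  · have hm0 : 0 ≤ m := by omega
    lift m to ℕ using hm0
    obtain ⟨e1, e2, e3⟩ := odd_decomp m
    obtain ⟨p1, p2, p3⟩ := pow_facts m
    have k1 : (X*X)^m * X ≤ 1 * X := mul_le_mul_of_nonpos_right p1 (le_of_lt hXneg)
    have k2 : 1 * Y ≤ (Y*Y)^m * Y := mul_le_mul_of_nonpos_right p3 (le_of_lt hYneg)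
    rw [e1, e2, e3]; nlinarith [hXlt, hYgt]

lemma mu2_pos (s : ℤ) (hs : 1 ≤ s) : 0 < (-1:ℝ)^s * (X^s + Y^s - 2) := by
  rcases Int.even_or_odd' s with ⟨m, rfl | rfl⟩
  · have hm0 : 0 ≤ m := by omega
    lift m to ℕ using hm0
    obtain ⟨e1, e2, e3⟩ := even_decomp m
    obtain ⟨p1, p2, p3⟩ := pow_facts m
    have hmne : m ≠ 0 := by omega
    have h4 : X*X ≤ (X*X)^m := le_self_pow₀ (by nlinarith [hXX4]) hmne
    rw [e1, e2, e3]; nlinarith [hXX4]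
  · have hm0 : 0 ≤ m := by omega
    lift m to ℕ using hm0
    obtain ⟨e1, e2, e3⟩ := odd_decomp m
    obtain ⟨p1, p2, p3⟩ := pow_facts m
    have k1 : (X*X)^m * X ≤ 1 * X := mul_le_mul_of_nonpos_right p1 (le_of_lt hXneg)
    have k3 : (Y*Y)^m * Y ≤ 0 := mul_nonpos_of_nonneg_of_nonpos (le_of_lt p2) (le_of_lt hYneg)
    rw [e1, e2, e3]; nlinarith [hXlt]

lemma neg_one_flip (s : ℤ) : (-1:ℝ)^(-s) = (-1:ℝ)^s := by
  have hsq : (-1:ℝ)^s * (-1:ℝ)^s = 1 := by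
    rw [← zpow_add₀ (by norm_num : (-1:ℝ) ≠ 0), show s + s = 2*s by ring, zpow_mul]
    norm_num
  rw [zpow_neg]
  exact inv_eq_of_mul_eq_one_right hsq

lemma nu_neg (s : ℤ) (hs : s ≤ -1) : (-1:ℝ)^s * (X^s - Y^s) < 0 := by
  have h := nu_pos (-s) (by omega)
  rw [neg_one_flip, Xneg, Yneg] at h
  nlinarith [h]

lemma DD_ne (n1 : ℤ) (h : 1 ≤ n1) : X^n1 - Y^n1 ≠ 0 := by
  intro hz
  have := nu_pos n1 h
  rw [hz, mul_zero] at this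
  exact lt_irrefl 0 this

lemma CC_ne (n1 : ℤ) (h : 1 ≤ n1) : CC n1 ≠ 0 := by
  rw [CC]
  exact mul_ne_zero (mul_ne_zero (by norm_num) (by nlinarith [hEpos])) (DD_ne n1 h)

lemma vrefl1 (n1 a b : ℤ) (ha : 0 ≤ a) (hab : a < b) : V n1 a b (-1) = V n1 a b 1 := by
  rw [V, V, UL n1 a b hab (-1) (by omega), UL n1 a b hab 1 (by omega),
    show X^(-1:ℤ) = Y from by simpa using Xneg 1, show Y^(-1:ℤ) = X from by simpa using Yneg 1,
    zpow_one, zpow_one, REFL1]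

lemma vrefl2 (n1 a b : ℤ) (ha : 0 ≤ a) (hab : a < b) : V n1 a b (-2) = 2 * V n1 a b 0 - V n1 a b 1 := by
  rw [V, V, V, UL n1 a b hab (-2) (by omega), UL n1 a b hab 0 (by omega),
    UL n1 a b hab 1 (by omega),
    show X^(-2:ℤ) = Y*Y from by rw [show (-2:ℤ) = -(2:ℤ) from rfl, Xneg, Ysq],
    show Y^(-2:ℤ) = X*X from by rw [show (-2:ℤ) = -(2:ℤ) from rfl, Yneg, Xsq],
    zpow_zero, zpow_zero, zpow_one, zpow_one, REFL2]
  ring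

lemma vreflR1 (n1 a b : ℤ) (hab : a < b) (hb : b ≤ n1) : V n1 a b (n1+1) = V n1 a b (n1-1) := by
  rw [V, V, UR n1 a b hab (n1+1) (by omega), UR n1 a b hab (n1-1) (by omega)]
  simp only [Xadd, Yadd, Xsub, Ysub, zpow_one]
  rw [REFR1]

lemma vreflR2 (n1 a b : ℤ) (hab : a < b) (hb : b ≤ n1) : V n1 a b (n1+2) = 2 * V n1 a b n1 - V n1 a b (n1-1) := by
  rw [V, V, V, UR n1 a b hab (n1+2) (by omega), UR n1 a b hab n1 (by omega),
    UR n1 a b hab (n1-1) (by omega)]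
  simp only [Xadd, Yadd, Xsub, Ysub, Xsq, Ysq, zpow_one]
  rw [REFR2]
  ring

lemma vrow (n1 a b : ℤ) (hn1 : 1 ≤ n1) (hab : a < b) (t : ℤ) :
    4 * V n1 a b t - V n1 a b (t-2) - V n1 a b (t-1) - V n1 a b (t+1) - V n1 a b (t+2)
      = ((if t = a then 1 else 0) - (if t = b then 1 else 0)) := by
  have h := R1U n1 a b t hab
  have hCC : CC n1 ≠ 0 := CC_ne n1 hn1
  have e1 : 4 * V n1 a b t - V n1 a b (t-2) - V n1 a b (t-1) - V n1 a b (t+1) - V n1 a b (t+2)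
      = (4 * U n1 a b t - U n1 a b (t-2) - U n1 a b (t-1) - U n1 a b (t+1) - U n1 a b (t+2)) / CC n1 := by
    rw [V, V, V, V, V]; ring
  rw [e1, h, show 5*(Y-X)*(X^n1-Y^n1) = CC n1 from rfl, mul_div_cancel_right₀ _ hCC]
/-- Rows with boundary truncation. -/
lemma rows (n1 a b : ℤ) (hn1 : 2 ≤ n1) (ha : 0 ≤ a) (hab : a < b) (hb : b ≤ n1)
    (t : ℤ) (ht0 : 0 ≤ t) (ht1 : t ≤ n1) :
    (if 0 ≤ t-2 ∧ t-2 ≤ n1 then V n1 a b t - V n1 a b (t-2) else 0) +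
    (if 0 ≤ t-1 ∧ t-1 ≤ n1 then V n1 a b t - V n1 a b (t-1) else 0) +
    (if 0 ≤ t+1 ∧ t+1 ≤ n1 then V n1 a b t - V n1 a b (t+1) else 0) +
    (if 0 ≤ t+2 ∧ t+2 ≤ n1 then V n1 a b t - V n1 a b (t+2) else 0)
      = ((if t = a then 1 else 0) - (if t = b then 1 else 0)) := by
  have main := vrow n1 a b (by omega) hab t
  by_cases h00 : t = 0
  · rw [if_neg (by omega), if_neg (by omega), if_pos (by omega), if_pos (by omega)]
    rw [h00] at main ⊢
    norm_num at main ⊢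
    rw [show (-2:ℤ) = -2 from rfl] at main
    rw [vrefl1 n1 a b ha hab, vrefl2 n1 a b ha hab] at main
    linarith
  · by_cases h01 : t = 1
    · rw [if_neg (by omega), if_pos (by omega), if_pos (by omega)]
      rw [h01] at main ⊢
      norm_num at main ⊢
      rw [vrefl1 n1 a b ha hab] at main
      by_cases h23 : (3:ℤ) ≤ n1
      · rw [if_pos (by omega)]
        linarith
      · rw [if_neg (by omega)]
        rw [show (3:ℤ) = n1+1 by omega, vreflR1 n1 a b hab hb,
          show n1-1 = 1 by omega] at main
        linarith
    · by_cases h10 : t = n1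
      · rw [if_pos (by omega), if_pos (by omega), if_neg (by omega), if_neg (by omega)]
        rw [h10] at main ⊢
        rw [vreflR1 n1 a b hab hb, vreflR2 n1 a b hab hb] at main
        linarith
      · by_cases h11 : t = n1 - 1
        · rw [if_pos (by omega), if_pos (by omega), if_pos (by omega), if_neg (by omega)]
          rw [show t+2 = n1+1 by omega, vreflR1 n1 a b hab hb, ← h11] at main
          linarith
        · rw [if_pos (by omega), if_pos (by omega), if_pos (by omega), if_pos (by omega)]
          linarith

open Classical in
lemma stepA (n : ℕ) (hn : 3 ≤ n) (f : ℤ → ℝ) (t : Fin n) :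
    (lap (linear2Tree n)).mulVec (fun c : Fin n => f (c:ℤ)) t =
      (if 0 ≤ (t:ℤ)-2 ∧ (t:ℤ)-2 ≤ (n:ℤ)-1 then f (t:ℤ) - f ((t:ℤ)-2) else 0) +
      (if 0 ≤ (t:ℤ)-1 ∧ (t:ℤ)-1 ≤ (n:ℤ)-1 then f (t:ℤ) - f ((t:ℤ)-1) else 0) +
      (if 0 ≤ (t:ℤ)+1 ∧ (t:ℤ)+1 ≤ (n:ℤ)-1 then f (t:ℤ) - f ((t:ℤ)+1) else 0) +
      (if 0 ≤ (t:ℤ)+2 ∧ (t:ℤ)+2 ≤ (n:ℤ)-1 then f (t:ℤ) - f ((t:ℤ)+2) else 0) := by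
  set G := linear2Tree n with hG
  have hadji : ∀ c : Fin n, G.Adj t c ↔ ((c:ℤ) = (t:ℤ)-2 ∨ (c:ℤ) = (t:ℤ)-1 ∨ (c:ℤ) = (t:ℤ)+1 ∨ (c:ℤ) = (t:ℤ)+2) := by
    intro c
    constructor
    · rintro ⟨hne, hle1, hle2⟩
      have : t.val ≠ c.val := fun h => hne (Fin.ext h)
      omega
    · intro h
      have htl := t.isLt
      have hcl := c.isLt
      exact ⟨fun he => by rw [he] at h; omega, by omega, by omega⟩
  -- row as a sum of adjacency-differences
  have hrow : (lap G).mulVec (fun c : Fin n => f (c:ℤ)) t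
      = ∑ c : Fin n, (if G.Adj t c then f (t:ℤ) - f (c:ℤ) else 0) := by
    show ∑ c : Fin n, (lap G) t c * f (c:ℤ) = _
    have hlap : ∀ c : Fin n, (lap G) t c
        = (if t = c then (∑ d : Fin n, if G.Adj t d then (1:ℝ) else 0) else 0)
          - (if G.Adj t c then (1:ℝ) else 0) := by
      intro c
      rw [lap]
      simp only [Matrix.of_apply]
      by_cases h : t = c
      · rw [if_pos h, if_pos h, ← h]
        simp [G.irrefl]
      · rw [if_neg h, if_neg h]
        split_ifs <;> ring
    calc ∑ c : Fin n, (lap G) t c * f (c:ℤ)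
        = ∑ c : Fin n, ((if t = c then (∑ d : Fin n, if G.Adj t d then (1:ℝ) else 0) * f (c:ℤ) else 0)
            - (if G.Adj t c then f (c:ℤ) else 0)) := by
          refine Finset.sum_congr rfl fun c _ => ?_
          rw [hlap c]
          split_ifs <;> ring
      _ = (∑ d : Fin n, if G.Adj t d then (1:ℝ) else 0) * f (t:ℤ)
            - ∑ c : Fin n, (if G.Adj t c then f (c:ℤ) else 0) := by
          rw [Finset.sum_sub_distrib, Finset.sum_ite_eq]
          simp
      _ = ∑ c : Fin n, (if G.Adj t c then f (t:ℤ) - f (c:ℤ) else 0) := by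
          rw [Finset.sum_mul]
          rw [← Finset.sum_sub_distrib]
          refine Finset.sum_congr rfl fun c _ => ?_
          split_ifs <;> ring
  rw [hrow]
  have hsingle : ∀ s : ℤ, (∑ c : Fin n, if (c:ℤ) = s then f (t:ℤ) - f (c:ℤ) else 0)
      = (if 0 ≤ s ∧ s ≤ (n:ℤ)-1 then f (t:ℤ) - f s else 0) := by
    intro s
    by_cases hs : 0 ≤ s ∧ s ≤ (n:ℤ)-1
    · have hsn : s.toNat < n := by omega
      rw [Finset.sum_eq_single (⟨s.toNat, hsn⟩ : Fin n)]
      · rw [if_pos (by show ((s.toNat:ℕ):ℤ) = s; omega), if_pos hs]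
        have hv : (((⟨s.toNat, hsn⟩ : Fin n)) : ℤ) = s := by show ((s.toNat:ℕ):ℤ) = s; omega
        rw [hv]
      · intro c _ hne
        rw [if_neg]
        intro hcs
        exact hne (Fin.ext (show c.val = s.toNat by omega))
      · intro h
        exact absurd (Finset.mem_univ _) h
    · rw [if_neg hs, Finset.sum_eq_zero]
      intro c _
      rw [if_neg]
      have := c.isLt
      omega
  have hsplit : ∀ c : Fin n, (if G.Adj t c then f (t:ℤ) - f (c:ℤ) else 0)
      = (if (c:ℤ) = (t:ℤ)-2 then f (t:ℤ) - f (c:ℤ) else 0)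
        + (if (c:ℤ) = (t:ℤ)-1 then f (t:ℤ) - f (c:ℤ) else 0)
        + (if (c:ℤ) = (t:ℤ)+1 then f (t:ℤ) - f (c:ℤ) else 0)
        + (if (c:ℤ) = (t:ℤ)+2 then f (t:ℤ) - f (c:ℤ) else 0) := by
    intro c
    by_cases h : G.Adj t c
    · rw [if_pos h]
      rcases (hadji c).1 h with h' | h' | h' | h' <;>
        · rw [h']
          rw [if_pos rfl]
          try rw [if_neg (by omega)]
          try rw [if_neg (by omega)]
          try rw [if_neg (by omega)]
          ring
    · rw [if_neg h]
      have : ¬((c:ℤ) = (t:ℤ)-2 ∨ (c:ℤ) = (t:ℤ)-1 ∨ (c:ℤ) = (t:ℤ)+1 ∨ (c:ℤ) = (t:ℤ)+2) :=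
        fun hor => h ((hadji c).2 hor)
      push_neg at this
      rw [if_neg this.1, if_neg this.2.1, if_neg this.2.2.1, if_neg this.2.2.2]
      ring
  calc ∑ c : Fin n, (if G.Adj t c then f (t:ℤ) - f (c:ℤ) else 0)
      = ∑ c : Fin n, ((if (c:ℤ) = (t:ℤ)-2 then f (t:ℤ) - f (c:ℤ) else 0)
        + (if (c:ℤ) = (t:ℤ)-1 then f (t:ℤ) - f (c:ℤ) else 0)
        + (if (c:ℤ) = (t:ℤ)+1 then f (t:ℤ) - f (c:ℤ) else 0)
        + (if (c:ℤ) = (t:ℤ)+2 then f (t:ℤ) - f (c:ℤ) else 0)) :=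
        Finset.sum_congr rfl fun c _ => hsplit c
    _ = _ := by
        rw [Finset.sum_add_distrib, Finset.sum_add_distrib, Finset.sum_add_distrib]
        have e2 : ∀ s : ℤ, (∑ c : Fin n, if (c:ℤ) = s then f (t:ℤ) - f (c:ℤ) else 0)
            = (if 0 ≤ s ∧ s ≤ (n:ℤ)-1 then f (t:ℤ) - f s else 0) := hsingle
        rw [e2, e2, e2, e2]
noncomputable def Phi (n1 a b : ℤ) : ℝ := -(WM n1 a b (X^b) (Y^b) ((b:ℝ))) / CC n1

open Classical in
lemma phiIsRes (n : ℕ) (hn : 3 ≤ n) (a b : ℤ) (ha : 0 ≤ a) (hab : a < b) (hb : b ≤ (n:ℤ)-1)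
    (ia ib : Fin n) (hia : ((ia:ℕ):ℤ) = a) (hib : ((ib:ℕ):ℤ) = b) :
    (lap (linear2Tree n)).mulVec (fun c : Fin n => V ((n:ℤ)-1) a b (c:ℤ)) = esrc ia ib := by
  funext t
  rw [stepA n hn (fun s => V ((n:ℤ)-1) a b s) t]
  have htl := t.isLt
  rw [rows ((n:ℤ)-1) a b (by omega) ha hab hb (t:ℤ) (by omega) (by omega)]
  rw [esrc]
  congr 1
  · by_cases h : ((t:ℕ):ℤ) = a
    · rw [if_pos h, if_pos (Fin.ext (by omega))]
    · rw [if_neg h, if_neg (fun he => h (by rw [he, hia]))]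
  · by_cases h : ((t:ℕ):ℤ) = b
    · rw [if_pos h, if_pos (Fin.ext (by omega))]
    · rw [if_neg h, if_neg (fun he => h (by rw [he, hib]))]

lemma V_diff (n1 a b : ℤ) (ha : 0 ≤ a) (hab : a < b) :
    V n1 a b a - V n1 a b b = Phi n1 a b := by
  rw [V, V, Phi, U, U, if_pos le_rfl, if_neg (by omega), if_pos le_rfl, W0L]
  ring

lemma Phi_sym (n1 a b : ℤ) : Phi n1 a b = Phi n1 (n1-b) (n1-a) := by
  have e : WM n1 (n1-b) (n1-a) (X^(n1-a)) (Y^(n1-a)) (((n1-a):ℤ):ℝ)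
      = WM n1 a b (X^b) (Y^b) ((b:ℝ)) := by
    rw [Xsub, Ysub, show (((n1-a):ℤ):ℝ) = (n1:ℝ)-(a:ℝ) by push_cast; ring]
    exact SYM n1 a b
  rw [Phi, Phi, e]

lemma Phi_diff (n1 a b : ℤ) (hn1 : 1 ≤ n1) :
    Phi n1 (a+1) (b+1) - Phi n1 a b
      = (X^(b-a) + Y^(b-a) - 2) * (X^(n1-a-b-1) - Y^(n1-a-b-1)) / (5*(X^n1 - Y^n1)) := by
  have hI2 := I2 n1 a b
  have hDD := DD_ne n1 hn1
  have hE : Y - X ≠ 0 := by nlinarith [hEpos]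
  rw [Phi, Phi, CC]
  rw [show X^(b+1) = X^b*X from by rw [Xadd, zpow_one],
    show Y^(b+1) = Y^b*Y from by rw [Yadd, zpow_one],
    show (((b+1):ℤ):ℝ) = (b:ℝ)+1 from by push_cast; ring]
  rw [div_sub_div_same, show
      -WM n1 (a+1) (b+1) (X^b*X) (Y^b*Y) ((b:ℝ)+1) - -WM n1 a b (X^b) (Y^b) ((b:ℝ))
      = -(WM n1 (a+1) (b+1) (X^b*X) (Y^b*Y) ((b:ℝ)+1)) + WM n1 a b (X^b) (Y^b) ((b:ℝ)) by ring,
    hI2]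
  rw [div_eq_div_iff (by exact mul_ne_zero (mul_ne_zero (by norm_num) hE) hDD)
    (mul_ne_zero (by norm_num) hDD)]
  simp only [Xsub, Ysub, zpow_one]
  ring

lemma signTrick (P S D p q r : ℝ) (hp : 0 < p*P) (hr : 0 < r*D)
    (hpqr : p*q*r = -1) (hp2 : p*p = 1) (hq2 : q*q = 1) (hr2 : r*r = 1) :
    (0 < q*S → P*S/(5*D) < 0) ∧ (S = 0 → P*S/(5*D) = 0) ∧ (q*S < 0 → 0 < P*S/(5*D)) := by
  obtain rfl | rfl := mul_self_eq_one_iff.1 hp2 <;>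
    obtain rfl | rfl := mul_self_eq_one_iff.1 hq2 <;>
      obtain rfl | rfl := mul_self_eq_one_iff.1 hr2 <;>
        norm_num at hpqr <;> norm_num at hp hr <;>
          refine ⟨fun hS => ?_, fun hS => by rw [hS, mul_zero, zero_div], fun hS => ?_⟩ <;>
            first
              | exact div_pos_iff.2 (Or.inl ⟨by nlinarith, by nlinarith⟩)
              | exact div_pos_iff.2 (Or.inr ⟨by nlinarith, by nlinarith⟩)
              | exact div_neg_iff.2 (Or.inl ⟨by nlinarith, by nlinarith⟩)
              | exact div_neg_iff.2 (Or.inr ⟨by nlinarith, by nlinarith⟩)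

lemma neg1sq (s : ℤ) : (-1:ℝ)^s * (-1:ℝ)^s = 1 := by
  rw [← zpow_add₀ (by norm_num : (-1:ℝ) ≠ 0), show s + s = 2*s by ring, zpow_mul]
  norm_num

lemma hpqr_fact (n1 a b : ℤ) :
    (-1:ℝ)^(b-a) * (-1:ℝ)^(n1-a-b-1) * (-1:ℝ)^n1 = -1 := by
  rw [← zpow_add₀ (by norm_num : (-1:ℝ) ≠ 0), ← zpow_add₀ (by norm_num : (-1:ℝ) ≠ 0),
    show b-a + (n1-a-b-1) + n1 = 2*(n1-a) - 1 by ring,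
    zpow_sub₀ (by norm_num : (-1:ℝ) ≠ 0), zpow_mul]
  norm_num

lemma diff_tri (n1 a b : ℤ) (hn1 : 2 ≤ n1) (ha : 0 ≤ a) (hab : a < b) :
    (0 < n1-a-b-1 → Phi n1 (a+1) (b+1) - Phi n1 a b < 0) ∧
    (n1-a-b-1 = 0 → Phi n1 (a+1) (b+1) - Phi n1 a b = 0) ∧
    (n1-a-b-1 < 0 → 0 < Phi n1 (a+1) (b+1) - Phi n1 a b) := by
  rw [Phi_diff n1 a b (by omega)]
  obtain ⟨c1, c2, c3⟩ := signTrick (X^(b-a) + Y^(b-a) - 2) (X^(n1-a-b-1) - Y^(n1-a-b-1))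
    (X^n1 - Y^n1) ((-1:ℝ)^(b-a)) ((-1:ℝ)^(n1-a-b-1)) ((-1:ℝ)^n1)
    (mu2_pos (b-a) (by omega)) (nu_pos n1 (by omega))
    (hpqr_fact n1 a b) (neg1sq _) (neg1sq _) (neg1sq _)
  refine ⟨fun h => c1 (nu_pos _ (by omega)), fun h => ?_, fun h => c3 (nu_neg _ (by omega))⟩
  exact c2 (by rw [h, zpow_zero, zpow_zero, sub_self])

lemma res_eval (n : ℕ) (hn : 3 ≤ n) (a b : ℤ) (ha : 0 ≤ a) (hab : a < b) (hb : b ≤ (n:ℤ)-1)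
    (ia ib : Fin n) (hia : ((ia:ℕ):ℤ) = a) (hib : ((ib:ℕ):ℤ) = b) (r : ℝ)
    (hr : IsResistance (linear2Tree n) ia ib r) : r = Phi ((n:ℤ)-1) a b := by
  have h := hr.2 (fun c : Fin n => V ((n:ℤ)-1) a b (c:ℤ))
    (phiIsRes n hn a b ha hab hb ia ib hia hib)
  rw [h]
  show V ((n:ℤ)-1) a b ((ia:ℕ):ℤ) - V ((n:ℤ)-1) a b ((ib:ℕ):ℤ) = _
  rw [hia, hib, V_diff _ _ _ ha hab]
end S15

open S15 in
/-- **unimodality.** For the straight linear 2-tree on `n ≥ 3` vertices with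
`m = n - 2` and a fixed `1 ≤ k ≤ n - 1`, let `g j = r(j, j+k)` for `1 ≤ j ≤ n - k`. Then
`g j = g (n - k - j + 1)`; if `m - k` is odd, `g` is strictly decreasing on
`[1, (m-k+3)/2]`, strictly increasing on `[(m-k+3)/2, n-k]`, and has its unique minimum at
`j = (m-k+3)/2`; if `m - k` is even, `g` is strictly decreasing on `[1, (m-k+2)/2]`,
satisfies `g((m-k+2)/2) = g((m-k+4)/2)`, and is strictly increasing on `[(m-k+4)/2, n-k]`;
and `g` attains its maximum exactly at the endpoints `j = 1` and `j = n - k`. -/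
theorem stmt15 (n : ℕ) (hn : 3 ≤ n) (m : ℕ) (hm : m = n - 2)
    (k : ℕ) (hk1 : 1 ≤ k) (hk2 : k ≤ n - 1)
    (g : ℕ → ℝ)
    (hg : ∀ j (hj1 : 1 ≤ j) (hj2 : j ≤ n - k),
      IsResistance (linear2Tree n) ⟨j - 1, by omega⟩ ⟨j + k - 1, by omega⟩ (g j)) :
    (∀ j, 1 ≤ j → j ≤ n - k → g j = g (n - k - j + 1)) ∧
    (Odd ((m : ℤ) - k) →
      (∀ j₁ j₂ : ℕ, 1 ≤ j₁ → j₁ < j₂ → 2 * (j₂ : ℤ) ≤ (m : ℤ) - k + 3 → g j₂ < g j₁) ∧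
      (∀ j₁ j₂ : ℕ, (m : ℤ) - k + 3 ≤ 2 * (j₁ : ℤ) → j₁ < j₂ → j₂ ≤ n - k → g j₁ < g j₂) ∧
      (∀ jmin : ℕ, 2 * (jmin : ℤ) = (m : ℤ) - k + 3 →
        ∀ j, 1 ≤ j → j ≤ n - k → j ≠ jmin → g jmin < g j)) ∧
    (Even ((m : ℤ) - k) →
      (∀ j₁ j₂ : ℕ, 1 ≤ j₁ → j₁ < j₂ → 2 * (j₂ : ℤ) ≤ (m : ℤ) - k + 2 → g j₂ < g j₁) ∧
      (∀ j₁ j₂ : ℕ, 2 * (j₁ : ℤ) = (m : ℤ) - k + 2 → 2 * (j₂ : ℤ) = (m : ℤ) - k + 4 →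
        g j₁ = g j₂) ∧
      (∀ j₁ j₂ : ℕ, (m : ℤ) - k + 4 ≤ 2 * (j₁ : ℤ) → j₁ < j₂ → j₂ ≤ n - k → g j₁ < g j₂)) ∧
    (∀ j, 1 < j → j < n - k → g j < g 1 ∧ g j < g (n - k)) := by
  have hnk1 : 1 ≤ n - k := by omega
  -- the closed formula for g
  have hgPhi : ∀ j : ℕ, 1 ≤ j → j ≤ n - k →
      g j = Phi ((n:ℤ)-1) ((j:ℤ)-1) ((j:ℤ)+(k:ℤ)-1) := by
    intro j hj1 hj2
    exact res_eval n hn ((j:ℤ)-1) ((j:ℤ)+(k:ℤ)-1) (by omega) (by omega) (by omega)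
      ⟨j - 1, by omega⟩ ⟨j + k - 1, by omega⟩
      (by show ((j-1:ℕ):ℤ) = (j:ℤ)-1; omega)
      (by show ((j+k-1:ℕ):ℤ) = (j:ℤ)+(k:ℤ)-1; omega)
      (g j) (hg j hj1 hj2)
  -- one-step trichotomy
  have hstep_lt : ∀ j : ℕ, 1 ≤ j → j+1 ≤ n-k → 2*j < n-k → g (j+1) < g j := by
    intro j h1 h2 h3
    have e1 := hgPhi j h1 (by omega)
    have e2 := hgPhi (j+1) (by omega) h2
    rw [show ((j+1:ℕ):ℤ)-1 = ((j:ℤ)-1)+1 by push_cast; ring,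
      show ((j+1:ℕ):ℤ)+(k:ℤ)-1 = ((j:ℤ)+(k:ℤ)-1)+1 by push_cast; ring] at e2
    obtain ⟨c1, _, _⟩ := diff_tri ((n:ℤ)-1) ((j:ℤ)-1) ((j:ℤ)+(k:ℤ)-1)
      (by omega) (by omega) (by omega)
    have := c1 (by omega)
    rw [e1, e2]
    linarith
  have hstep_eq : ∀ j : ℕ, 1 ≤ j → j+1 ≤ n-k → 2*j = n-k → g (j+1) = g j := by
    intro j h1 h2 h3
    have e1 := hgPhi j h1 (by omega)
    have e2 := hgPhi (j+1) (by omega) h2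
    rw [show ((j+1:ℕ):ℤ)-1 = ((j:ℤ)-1)+1 by push_cast; ring,
      show ((j+1:ℕ):ℤ)+(k:ℤ)-1 = ((j:ℤ)+(k:ℤ)-1)+1 by push_cast; ring] at e2
    obtain ⟨_, c2, _⟩ := diff_tri ((n:ℤ)-1) ((j:ℤ)-1) ((j:ℤ)+(k:ℤ)-1)
      (by omega) (by omega) (by omega)
    have := c2 (by omega)
    rw [e1, e2]
    linarith
  have hstep_gt : ∀ j : ℕ, 1 ≤ j → j+1 ≤ n-k → n-k < 2*j → g j < g (j+1) := by
    intro j h1 h2 h3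
    have e1 := hgPhi j h1 (by omega)
    have e2 := hgPhi (j+1) (by omega) h2
    rw [show ((j+1:ℕ):ℤ)-1 = ((j:ℤ)-1)+1 by push_cast; ring,
      show ((j+1:ℕ):ℤ)+(k:ℤ)-1 = ((j:ℤ)+(k:ℤ)-1)+1 by push_cast; ring] at e2
    obtain ⟨_, _, c3⟩ := diff_tri ((n:ℤ)-1) ((j:ℤ)-1) ((j:ℤ)+(k:ℤ)-1)
      (by omega) (by omega) (by omega)
    have := c3 (by omega)
    rw [e1, e2]
    linarith
  -- chains
  have gdec : ∀ d j₁ : ℕ, 1 ≤ j₁ → j₁+d+1 ≤ n-k → 2*(j₁+d+1) ≤ n-k+1 → g (j₁+d+1) < g j₁ := by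
    intro d
    induction d with
    | zero => intro j₁ h1 h2 h3; exact hstep_lt j₁ h1 (by omega) (by omega)
    | succ d ih =>
        intro j₁ h1 h2 h3
        have hs := hstep_lt (j₁+d+1) (by omega) (by omega) (by omega)
        have hi := ih j₁ h1 (by omega) (by omega)
        have he : j₁+(d+1)+1 = (j₁+d+1)+1 := by omega
        rw [he]
        exact lt_trans hs hi
  have ginc : ∀ d j₁ : ℕ, n-k+1 ≤ 2*j₁ → j₁+d+1 ≤ n-k → g j₁ < g (j₁+d+1) := by
    intro d
    induction d with
    | zero => intro j₁ h1 h2; exact hstep_gt j₁ (by omega) (by omega) (by omega)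
    | succ d ih =>
        intro j₁ h1 h2
        have hs := hstep_gt j₁ (by omega) (by omega) (by omega)
        have hi := ih (j₁+1) (by omega) (by omega)
        have he : j₁+(d+1)+1 = (j₁+1)+d+1 := by omega
        rw [he]
        exact lt_trans hs hi
  -- symmetry
  have hsymAll : ∀ j, 1 ≤ j → j ≤ n - k → g j = g (n - k - j + 1) := by
    intro j h1 h2
    rw [hgPhi j h1 h2, hgPhi (n-k-j+1) (by omega) (by omega),
      Phi_sym ((n:ℤ)-1) ((j:ℤ)-1) ((j:ℤ)+(k:ℤ)-1)]
    have e1 : ((n:ℤ)-1) - ((j:ℤ)+(k:ℤ)-1) = ((n-k-j+1:ℕ):ℤ)-1 := by omega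
    have e2 : ((n:ℤ)-1) - ((j:ℤ)-1) = ((n-k-j+1:ℕ):ℤ)+(k:ℤ)-1 := by omega
    rw [e1, e2]
  have hsym1 : g 1 = g (n-k) := by
    have := hsymAll 1 le_rfl (by omega)
    rwa [show n-k-1+1 = n-k by omega] at this
  refine ⟨hsymAll, fun _hodd => ⟨?_, ?_, ?_⟩, fun _heven => ⟨?_, ?_, ?_⟩, ?_⟩
  · intro j₁ j₂ h1 hlt hle
    have hd := gdec (j₂-j₁-1) j₁ h1 (by omega) (by omega)
    rwa [show j₁+(j₂-j₁-1)+1 = j₂ by omega] at hd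
  · intro j₁ j₂ h1 hlt hle
    have hi := ginc (j₂-j₁-1) j₁ (by omega) (by omega)
    rwa [show j₁+(j₂-j₁-1)+1 = j₂ by omega] at hi
  · intro jmin hjm j hj1 hj2 hne
    rcases lt_or_gt_of_ne hne with h | h
    · have hd := gdec (jmin-j-1) j hj1 (by omega) (by omega)
      rwa [show j+(jmin-j-1)+1 = jmin by omega] at hd
    · have hi := ginc (j-jmin-1) jmin (by omega) (by omega)
      rwa [show jmin+(j-jmin-1)+1 = j by omega] at hi
  · intro j₁ j₂ h1 hlt hle
    have hd := gdec (j₂-j₁-1) j₁ h1 (by omega) (by omega)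
    rwa [show j₁+(j₂-j₁-1)+1 = j₂ by omega] at hd
  · intro j₁ j₂ he1 he2
    have h := hstep_eq j₁ (by omega) (by omega) (by omega)
    rw [show j₂ = j₁+1 by omega]
    exact h.symm
  · intro j₁ j₂ h1 hlt hle
    have hi := ginc (j₂-j₁-1) j₁ (by omega) (by omega)
    rwa [show j₁+(j₂-j₁-1)+1 = j₂ by omega] at hi
  · intro j h1 h2
    by_cases hc : 2*j ≤ n-k+1
    · have hd := gdec (j-1-1) 1 le_rfl (by omega) (by omega)
      rw [show 1+(j-1-1)+1 = j by omega] at hd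
      exact ⟨hd, by rw [← hsym1]; exact hd⟩
    · have hi := ginc (n-k-j-1) j (by omega) (by omega)
      rw [show j+(n-k-j-1)+1 = n-k by omega] at hi
      exact ⟨by rw [hsym1]; exact hi, hi⟩
end

section
/- For every integer m ≥ 1, Σ_{i=1}^{m} F_i·F_{i+1} / (L_i·L_{i+1}) = ((m+1)·L_{m+1} − F_{m+1}) / (5·L_{m+1}); moreover, for every integer m ≥ 1, 2·F_{m+1}² / (L_m·L_{m+1}) + (m·L_m − F_m)/(5·L_m) = (m+1)/5 + 4·F_{m+1}/(5·L_{m+1}). -/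
/-- The Lucas numbers: `L_0 = 2`, `L_1 = 1`, `L_{n+2} = L_{n+1} + L_n`. -/
def lucas : ℕ → ℕ
  | 0 => 2
  | 1 => 1
  | n + 2 => lucas (n + 1) + lucas n

lemma lucas_key : ∀ n : ℕ, lucas n + Nat.fib n = 2 * Nat.fib (n + 1) := by
  intro n
  induction n using Nat.twoStepInduction with
  | zero => decide
  | one => decide
  | more n ih1 ih2 =>
    have h : lucas (n + 2) = lucas (n + 1) + lucas n := rfl
    have hf : Nat.fib (n + 2) = Nat.fib n + Nat.fib (n + 1) := Nat.fib_add_two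
    have hf3 : Nat.fib (n + 3) = Nat.fib (n + 1) + Nat.fib (n + 2) := Nat.fib_add_two
    simp only [show n + 1 + 1 = n + 2 from rfl, show n + 2 + 1 = n + 3 from rfl] at *
    omega

lemma lucas_pos (n : ℕ) : 0 < lucas n := by
  have h := lucas_key n
  have h1 : Nat.fib n < Nat.fib (n + 1) + Nat.fib (n + 1) := by
    have := Nat.fib_le_fib_succ (n := n)
    have : 1 ≤ Nat.fib (n + 1) := Nat.fib_pos.2 (Nat.succ_pos n)
    omega
  omega

lemma lucas_rat (n : ℕ) : (lucas n : ℚ) = 2 * Nat.fib (n + 1) - Nat.fib n := by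
  have h := lucas_key n
  have : ((lucas n + Nat.fib n : ℕ) : ℚ) = ((2 * Nat.fib (n + 1) : ℕ) : ℚ) := by rw [h]
  push_cast at this
  linarith

lemma lucas_ne (n : ℕ) : (lucas n : ℚ) ≠ 0 := by
  exact_mod_cast (lucas_pos n).ne'

/-- For every `m ≥ 1`:
`Σ_{i=1}^m F_i F_{i+1}/(L_i L_{i+1}) = ((m+1) L_{m+1} - F_{m+1})/(5 L_{m+1})`, and
`2 F_{m+1}²/(L_m L_{m+1}) + (m L_m - F_m)/(5 L_m) = (m+1)/5 + 4 F_{m+1}/(5 L_{m+1})`. -/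
theorem stmt19 :
    (∀ m : ℕ, 1 ≤ m →
      ∑ i ∈ Finset.Icc 1 m,
          (Nat.fib i : ℚ) * (Nat.fib (i + 1) : ℚ) / ((lucas i : ℚ) * (lucas (i + 1) : ℚ))
        = (((m : ℚ) + 1) * (lucas (m + 1) : ℚ) - (Nat.fib (m + 1) : ℚ)) /
            (5 * (lucas (m + 1) : ℚ))) ∧
    (∀ m : ℕ, 1 ≤ m →
      2 * (Nat.fib (m + 1) : ℚ) ^ 2 / ((lucas m : ℚ) * (lucas (m + 1) : ℚ))
          + ((m : ℚ) * (lucas m : ℚ) - (Nat.fib m : ℚ)) / (5 * (lucas m : ℚ))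
        = ((m : ℚ) + 1) / 5 + 4 * (Nat.fib (m + 1) : ℚ) / (5 * (lucas (m + 1) : ℚ))) := by
  constructor
  · intro m hm
    induction m, hm using Nat.le_induction with
    | base => norm_num [lucas, Nat.fib]
    | succ m hm ih =>
      rw [Finset.sum_Icc_succ_top (by omega), ih]
      have hL1 := lucas_rat (m + 1)
      have hL2 := lucas_rat (m + 2)
      have hf : (Nat.fib (m + 3) : ℚ) = Nat.fib (m + 1) + Nat.fib (m + 2) := by
        rw [show m + 3 = (m + 1) + 2 from rfl, Nat.fib_add_two]; push_cast; ring
      have h1 := lucas_ne (m + 1)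
      have h2 := lucas_ne (m + 2)
      rw [hf] at hL2
      push_cast
      rw [hL1, hL2] at *
      field_simp
      ring
  · intro m hm
    have hL1 := lucas_rat m
    have hL2 := lucas_rat (m + 1)
    have hf : (Nat.fib (m + 2) : ℚ) = Nat.fib m + Nat.fib (m + 1) := by
      rw [Nat.fib_add_two]; push_cast; ring
    have h1 := lucas_ne m
    have h2 := lucas_ne (m + 1)
    rw [hf] at hL2
    rw [hL1, hL2] at *
    field_simp
    ring
end
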